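/- For any natural number r ≤ dim H, the minimum over density operators ρ with rank(ρ) ≤ r of the perfect-distinguishability ratio μ_{ρ,M}(1) equals the minimum over the same domain of the distinguishability ratio μ̂_{ρ,M} = inf_{σ≠ρ} ‖ρ−σ‖_M/‖ρ−σ‖₁, and both equal the minimum of μ_{ρ,M}(1) over ρ with rank(ρ) ≤ min{r, (dim H)/2}. -/

import Mathlib

/-!
Orthogonal states `ρ`, `σ` have `rank ρ + rank σ ≤ d`. So if `rank ρ > d / 2`, every competitor `σ`
in `μ_ρ(1)` has rank below `d / 2` and `μ_σ(1) ≤ ½‖σ - ρ‖_M = ½‖ρ - σ‖_M`; hence the minimum of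
`μ(1)` does not change when ranks are restricted to `d / 2`. For `μ̂`, the Jordan decomposition
writes `ρ - σ = t (ρ' - σ')` with orthogonal states `ρ'`, `σ'` and `rank ρ' ≤ rank ρ`, so that
`‖ρ - σ‖_M / ‖ρ - σ‖₁ = ½‖ρ' - σ'‖_M ≥ μ_ρ'(1)`. Conversely `μ̂_ρ ≤ μ_ρ(1)`, because orthogonal
states are at trace distance `2`.
-/

open Matrix
open scoped ComplexOrder

namespace QSVQDH

variable {d : ℕ}

/-- Schatten 1-norm (trace norm). -/
noncomputable def trNorm (A : Matrix (Fin d) (Fin d) ℂ) : ℝ :=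
  ((Matrix.posSemidef_conjTranspose_mul_self A).isHermitian.eigenvectorUnitary.1 *
      diagonal ((fun x : ℝ => (x : ℂ)) ∘ (fun x : ℝ => √x) ∘ (Matrix.posSemidef_conjTranspose_mul_self A).isHermitian.eigenvalues) *
      (star (Matrix.posSemidef_conjTranspose_mul_self A).isHermitian.eigenvectorUnitary :
        Matrix (Fin d) (Fin d) ℂ)).trace.re

/-- Schatten 2-norm (Hilbert–Schmidt norm). -/
noncomputable def hsNorm (A : Matrix (Fin d) (Fin d) ℂ) : ℝ :=
  Real.sqrt ((Aᴴ * A).trace.re)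

/-- Operator norm. -/
noncomputable def opNorm (A : Matrix (Fin d) (Fin d) ℂ) : ℝ :=
  ‖Matrix.toEuclideanCLM (𝕜 := ℂ) A‖

/-- Density operator: positive semidefinite with unit trace. -/
def IsDensity (ρ : Matrix (Fin d) (Fin d) ℂ) : Prop := ρ.PosSemidef ∧ ρ.trace = 1

/-- POVM element: 0 ≤ M ≤ I. -/
def IsPOVMElem (M : Matrix (Fin d) (Fin d) ℂ) : Prop := M.PosSemidef ∧ (1 - M).PosSemidef

/-- A measurement class of binary effects: contains 0, consists of POVM elements,
is convex, and is closed under M ↦ I − M. -/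
def IsMClass (Mset : Set (Matrix (Fin d) (Fin d) ℂ)) : Prop :=
  0 ∈ Mset ∧ (∀ M ∈ Mset, IsPOVMElem M) ∧ Convex ℝ Mset ∧ (∀ M ∈ Mset, 1 - M ∈ Mset)

/-- The M-seminorm ‖Δ‖_M = sup_{M ∈ Mset} (2 tr(MΔ) − tr Δ). -/
noncomputable def Mnorm (Mset : Set (Matrix (Fin d) (Fin d) ℂ))
    (Δ : Matrix (Fin d) (Fin d) ℂ) : ℝ :=
  sSup ((fun M => 2 * (M * Δ).trace.re - Δ.trace.re) '' Mset)

/-- The ε-distinguishability ratio μ_{ρ,M}(ε). -/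
noncomputable def mu (Mset : Set (Matrix (Fin d) (Fin d) ℂ))
    (ρ : Matrix (Fin d) (Fin d) ℂ) (ε : ℝ) : ℝ :=
  (1 / (2 * ε)) *
    sInf ((fun σ => Mnorm Mset (ρ - σ)) '' {σ | IsDensity σ ∧ 2 * ε ≤ trNorm (ρ - σ)})

/-- The ε-visibility γ_{V,M}(ε), where the subspace V is given by its
orthogonal projector P. -/
noncomputable def gamma (Mset : Set (Matrix (Fin d) (Fin d) ℂ))
    (P : Matrix (Fin d) (Fin d) ℂ) (ε : ℝ) : ℝ :=
  (1 / ε) * sSup ((fun Ω =>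
      sInf ((fun p : Matrix (Fin d) (Fin d) ℂ × Matrix (Fin d) (Fin d) ℂ =>
          (Ω * (p.1 - p.2)).trace.re) ''
        {p | IsDensity p.1 ∧ P * p.1 = p.1 ∧ IsDensity p.2 ∧ (p.2 * P).trace.re ≤ 1 - ε}))
    '' Mset)

/-- The ε-visibility in its minimax (minimum) form. -/
noncomputable def gammaMin (Mset : Set (Matrix (Fin d) (Fin d) ℂ))
    (P : Matrix (Fin d) (Fin d) ℂ) (ε : ℝ) : ℝ :=
  sInf ((fun p : Matrix (Fin d) (Fin d) ℂ × Matrix (Fin d) (Fin d) ℂ =>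
      (1 / (2 * ε)) * Mnorm Mset (p.1 - p.2)) ''
    {p | IsDensity p.1 ∧ P * p.1 = p.1 ∧ IsDensity p.2 ∧ (p.2 * P).trace.re ≤ 1 - ε})

/-- μ_{ρ,M}(1), defined through perfectly distinguishable (orthogonal) counterparts. -/
noncomputable def muone (Mset : Set (Matrix (Fin d) (Fin d) ℂ))
    (ρ : Matrix (Fin d) (Fin d) ℂ) : ℝ :=
  (1 / 2) * sInf ((fun σ => Mnorm Mset (ρ - σ)) '' {σ | IsDensity σ ∧ (ρ * σ).trace = 0})

/-- The distinguishability ratio μ̂_{ρ,M}. -/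
noncomputable def muhat (Mset : Set (Matrix (Fin d) (Fin d) ℂ))
    (ρ : Matrix (Fin d) (Fin d) ℂ) : ℝ :=
  sInf ((fun σ => Mnorm Mset (ρ - σ) / trNorm (ρ - σ)) '' {σ | IsDensity σ ∧ σ ≠ ρ})

end QSVQDH

open scoped MatrixOrder Pointwise

namespace Matrix.PosSemidef

variable {n : Type*} [Fintype n] {A B : Matrix n n ℂ}

lemma trace_eq_re (hA : A.PosSemidef) : A.trace = (A.trace.re : ℂ) :=
  Complex.eq_re_of_ofReal_le (r := 0) (by exact_mod_cast hA.trace_nonneg)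

lemma trace_re_nonneg (hA : A.PosSemidef) : 0 ≤ A.trace.re :=
  (Complex.nonneg_iff.mp hA.trace_nonneg).1

lemma trace_re_pos (hA : A.PosSemidef) (hA0 : A ≠ 0) : 0 < A.trace.re :=
  hA.trace_re_nonneg.lt_of_ne fun h => hA0 <| hA.trace_eq_zero_iff.mp <| by
    rw [hA.trace_eq_re, ← h, Complex.ofReal_zero]

variable [DecidableEq n]

/-- `tr (AB) = ‖√A √B‖₂²`. -/
lemma mul_eq_zero_of_trace_mul_eq_zero (hA : A.PosSemidef) (hB : B.PosSemidef)
    (h : (A * B).trace = 0) : A * B = 0 := by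
  have hA' : (CFC.sqrt A)ᴴ = CFC.sqrt A := (CFC.sqrt_nonneg A).posSemidef.1
  have hB' : (CFC.sqrt B)ᴴ = CFC.sqrt B := (CFC.sqrt_nonneg B).posSemidef.1
  have hAA : CFC.sqrt A * CFC.sqrt A = A := CFC.sqrt_mul_sqrt_self A hA.nonneg
  have hBB : CFC.sqrt B * CFC.sqrt B = B := CFC.sqrt_mul_sqrt_self B hB.nonneg
  have hzero : CFC.sqrt A * CFC.sqrt B = 0 := by
    rw [← trace_conjTranspose_mul_self_eq_zero_iff, conjTranspose_mul, hA', hB',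
      mul_assoc, ← mul_assoc (CFC.sqrt A), hAA, trace_mul_comm, mul_assoc, hBB, h]
  calc A * B = CFC.sqrt A * (CFC.sqrt A * CFC.sqrt B) * CFC.sqrt B := by
        rw [← mul_assoc, hAA, mul_assoc, hBB]
    _ = 0 := by rw [hzero, mul_zero, zero_mul]

/-- On `ker A` the form of `A - B` is `≤ 0`, so the range of its positive part meets `ker A`
trivially. -/
lemma rank_posPart_sub_le (hA : A.PosSemidef) (hB : B.PosSemidef) :
    ((A - B)⁺).rank ≤ A.rank := by
  set P := (A - B)⁺
  have hP : P.PosSemidef := (CFC.posPart_nonneg _).posSemidef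
  have hdisj : Disjoint (LinearMap.range P.mulVecLin) (LinearMap.ker A.mulVecLin) := by
    rw [Submodule.disjoint_def]
    rintro _ ⟨u, rfl⟩ hAv
    simp only [mulVecLin_apply, LinearMap.mem_ker] at hAv ⊢
    have hNv : (A - B)⁻ *ᵥ (P *ᵥ u) = 0 := by
      rw [mulVec_mulVec, CFC.negPart_mul_posPart, zero_mulVec]
    have hform : star (P *ᵥ u) ⬝ᵥ P *ᵥ (P *ᵥ u) = -(star (P *ᵥ u) ⬝ᵥ B *ᵥ (P *ᵥ u)) := by
      rw [← sub_zero (P *ᵥ (P *ᵥ u)), ← hNv, ← sub_mulVec,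
        CFC.posPart_sub_negPart _ (hA.1.sub hB.1), sub_mulVec, hAv, zero_sub, dotProduct_neg]
    have hPPu : P *ᵥ (P *ᵥ u) = 0 := (hP.dotProduct_mulVec_zero_iff _).mp <|
      le_antisymm (hform ▸ neg_nonpos.mpr (hB.dotProduct_mulVec_nonneg _))
        (hP.dotProduct_mulVec_nonneg _)
    rw [← dotProduct_star_self_eq_zero, star_mulVec, ← dotProduct_mulVec, hP.1.eq, hPPu,
      dotProduct_zero]
  have := Submodule.finrank_add_finrank_le_of_disjoint hdisj
  have := LinearMap.finrank_range_add_finrank_ker A.mulVecLin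
  simp only [Module.finrank_fintype_fun_eq_card] at *
  unfold Matrix.rank
  omega

end Matrix.PosSemidef

namespace Matrix

variable {n : Type*} [Fintype n] {A : Matrix n n ℂ}

lemma rank_real_smul_le (t : ℝ) : (t • A).rank ≤ A.rank := by
  rcases eq_or_ne t 0 with rfl | ht
  · simp
  rw [← Complex.coe_smul,
    rank_smul_of_mem_nonZeroDivisors A (mem_nonZeroDivisors_of_ne_zero (by exact_mod_cast ht))]

lemma one_le_rank_of_ne_zero (hA : A ≠ 0) : 1 ≤ A.rank := by
  classical
  by_contra! h
  have hA0 : A.mulVecLin = 0 :=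
    LinearMap.range_eq_bot.mp (Submodule.finrank_eq_zero.mp (Nat.lt_one_iff.mp h))
  exact hA (ext fun i j => by simpa using congr_fun (LinearMap.congr_fun hA0 (Pi.single j 1)) i)

lemma exists_mulVec_eq_zero_of_rank_lt [DecidableEq n] (h : A.rank < Fintype.card n) :
    ∃ v ≠ 0, A *ᵥ v = 0 :=
  exists_mulVec_eq_zero_iff.mpr (by_contra fun hdet => h.ne (rank_of_det_ne_zero hdet))

end Matrix

namespace QSVQDH

variable {d : ℕ} {Mset : Set (Matrix (Fin d) (Fin d) ℂ)} {ρ σ : Matrix (Fin d) (Fin d) ℂ}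

lemma cast_le_min_half_iff {k r n : ℕ} :
    (k : ℝ) ≤ min (r : ℝ) ((n : ℝ) / 2) ↔ k ≤ r ∧ 2 * k ≤ n := by
  rw [le_min_iff, le_div_iff₀ two_pos, mul_comm]
  norm_cast

lemma trNorm_eq_trace_sqrt (A : Matrix (Fin d) (Fin d) ℂ) :
    trNorm A = (CFC.sqrt (Aᴴ * A)).trace.re := by
  have hAA := Matrix.posSemidef_conjTranspose_mul_self A
  rw [CFC.sqrt_eq_real_sqrt (Aᴴ * A) hAA.nonneg, cfcₙ_eq_cfc, hAA.isHermitian.cfc_eq,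
    IsHermitian.cfc, Unitary.conjStarAlgAut_apply, trNorm]
  rfl

lemma trNorm_nonneg (A : Matrix (Fin d) (Fin d) ℂ) : 0 ≤ trNorm A := by
  rw [trNorm_eq_trace_sqrt]
  exact (CFC.sqrt_nonneg _).posSemidef.trace_re_nonneg

lemma trNorm_smul {t : ℝ} (ht : 0 ≤ t) (A : Matrix (Fin d) (Fin d) ℂ) :
    trNorm (t • A) = t * trNorm A := by
  have hS := CFC.sqrt_nonneg (Aᴴ * A)
  have hsq : (t • CFC.sqrt (Aᴴ * A)) ^ 2 = (t • A)ᴴ * (t • A) := by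
    rw [smul_pow, CFC.sq_sqrt _ (Matrix.posSemidef_conjTranspose_mul_self A).nonneg,
      conjTranspose_smul, star_trivial, smul_mul_smul_comm, sq]
  rw [trNorm_eq_trace_sqrt, trNorm_eq_trace_sqrt, ← hsq, CFC.sqrt_sq _ (smul_nonneg ht hS),
    trace_smul, Complex.smul_re, smul_eq_mul]

lemma trNorm_sub_of_mul_eq_zero {A B : Matrix (Fin d) (Fin d) ℂ} (hA : A.PosSemidef)
    (hB : B.PosSemidef) (h : A * B = 0) : trNorm (A - B) = (A.trace + B.trace).re := by
  have hBA : B * A = 0 := by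
    simpa [hA.1.eq, hB.1.eq] using congrArg conjTranspose h
  have hsq : (A + B) ^ 2 = (A - B)ᴴ * (A - B) := by
    rw [conjTranspose_sub, hA.1.eq, hB.1.eq, sq, add_mul, mul_add, mul_add, sub_mul, mul_sub,
      mul_sub, h, hBA]
    abel
  rw [trNorm_eq_trace_sqrt, ← hsq, CFC.sqrt_sq _ (hA.add hB).nonneg, trace_add]

lemma IsDensity.ne_zero (hρ : IsDensity ρ) : ρ ≠ 0 := by
  rintro rfl
  simpa using hρ.2

lemma IsDensity.one_le_rank (hρ : IsDensity ρ) : 1 ≤ ρ.rank :=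
  Matrix.one_le_rank_of_ne_zero hρ.ne_zero

lemma IsDensity.rank_le_and_lt_of_cast_le_min {r : ℕ} (hρ : IsDensity ρ)
    (h : (ρ.rank : ℝ) ≤ min (r : ℝ) ((d : ℝ) / 2)) : ρ.rank ≤ r ∧ ρ.rank < d := by
  have := hρ.one_le_rank
  have := cast_le_min_half_iff.mp h
  omega

lemma IsDensity.ne_of_mul_eq_zero (hρ : IsDensity ρ) (h : ρ * σ = 0) : σ ≠ ρ := by
  rintro rfl
  exact hρ.ne_zero (conjTranspose_mul_self_eq_zero.mp (hρ.1.1.eq.symm ▸ h))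

lemma trace_sub_eq_zero (hρ : IsDensity ρ) (hσ : IsDensity σ) : (ρ - σ).trace = 0 := by
  rw [trace_sub, hρ.2, hσ.2, sub_self]

lemma trNorm_sub_eq_two (hρ : IsDensity ρ) (hσ : IsDensity σ) (h : ρ * σ = 0) :
    trNorm (ρ - σ) = 2 := by
  rw [trNorm_sub_of_mul_eq_zero hρ.1 hσ.1 h, hρ.2, hσ.2]
  norm_num

lemma isDensity_inv_trace_smul {P : Matrix (Fin d) (Fin d) ℂ} (hP : P.PosSemidef) (hP0 : P ≠ 0) :
    IsDensity ((P.trace.re)⁻¹ • P) := by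
  have ht : P.trace.re ≠ 0 := (hP.trace_re_pos hP0).ne'
  refine ⟨hP.smul (inv_nonneg.mpr hP.trace_re_nonneg), ?_⟩
  rw [trace_smul, hP.trace_eq_re, Complex.real_smul, ← Complex.ofReal_mul, Complex.ofReal_re,
    inv_mul_cancel₀ ht, Complex.ofReal_one]

lemma exists_isDensity_rank_le_one_mul_eq_zero (h : ρ.rank < d) :
    ∃ σ, IsDensity σ ∧ σ.rank ≤ 1 ∧ ρ * σ = 0 := by
  obtain ⟨v, hv, hρv⟩ :=
    Matrix.exists_mulVec_eq_zero_of_rank_lt (A := ρ) (by rwa [Fintype.card_fin])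
  have hvv : vecMulVec v (star v) ≠ 0 := fun h0 => hv <| by
    simpa [dotProduct_comm v] using congrArg trace h0
  refine ⟨_, isDensity_inv_trace_smul (posSemidef_vecMulVec_self_star v) hvv, ?_, ?_⟩
  · exact (Matrix.rank_real_smul_le _).trans (rank_vecMulVec_le _ _)
  · rw [mul_smul_comm, mul_vecMulVec, hρv, zero_vecMulVec, smul_zero]

lemma exists_isDensity_rank_le_one (hd : 0 < d) : ∃ σ : Matrix (Fin d) (Fin d) ℂ,
    IsDensity σ ∧ σ.rank ≤ 1 := by
  obtain ⟨σ, hσ, hσ1, -⟩ := exists_isDensity_rank_le_one_mul_eq_zero (ρ := 0) (by simpa using hd)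
  exact ⟨σ, hσ, hσ1⟩

lemma exists_isDensity_ne (hd : 2 ≤ d) (ρ : Matrix (Fin d) (Fin d) ℂ) :
    ∃ σ, IsDensity σ ∧ σ ≠ ρ := by
  obtain ⟨σ, hσ, hσ1⟩ := exists_isDensity_rank_le_one (d := d) (by omega)
  by_cases hσρ : σ = ρ
  · obtain ⟨τ, hτ, -, hστ⟩ := exists_isDensity_rank_le_one_mul_eq_zero (ρ := σ) (by omega)
    exact ⟨τ, hτ, hσρ ▸ hσ.ne_of_mul_eq_zero hστ⟩
  · exact ⟨σ, hσ, hσρ⟩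

lemma Mnorm_nonneg (h0 : 0 ∈ Mset) {Δ : Matrix (Fin d) (Fin d) ℂ} (hΔ : Δ.trace = 0) :
    0 ≤ Mnorm Mset Δ :=
  Real.sSup_nonneg' ⟨0, ⟨0, h0, by simp [hΔ]⟩, le_rfl⟩

lemma Mnorm_neg (hsymm : ∀ M ∈ Mset, 1 - M ∈ Mset) {Δ : Matrix (Fin d) (Fin d) ℂ}
    (hΔ : Δ.trace = 0) : Mnorm Mset (-Δ) = Mnorm Mset Δ := by
  have himage : (fun M => 1 - M) '' Mset = Mset :=
    Set.Subset.antisymm (Set.image_subset_iff.mpr hsymm)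
      fun M hM => ⟨1 - M, hsymm M hM, sub_sub_cancel 1 M⟩
  have hfun : (fun M => 2 * (M * -Δ).trace.re - (-Δ).trace.re) =
      (fun M => 2 * (M * Δ).trace.re - Δ.trace.re) ∘ (fun M => 1 - M) := by
    funext M
    simp [sub_mul, hΔ]
  rw [Mnorm, hfun, Set.image_comp, himage, Mnorm]

lemma Mnorm_smul {t : ℝ} (ht : 0 ≤ t) (Δ : Matrix (Fin d) (Fin d) ℂ) :
    Mnorm Mset (t • Δ) = t * Mnorm Mset Δ := by
  have hfun : (fun M => 2 * (M * (t • Δ)).trace.re - (t • Δ).trace.re) =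
      (t • ·) ∘ (fun M => 2 * (M * Δ).trace.re - Δ.trace.re) := by
    funext M
    simp only [Function.comp_apply, mul_smul_comm, trace_smul, Complex.smul_re, smul_eq_mul]
    ring
  rw [Mnorm, hfun, Set.image_comp, Set.image_smul, Real.sSup_smul_of_nonneg ht, Mnorm,
    smul_eq_mul]

lemma muone_nonneg (h0 : 0 ∈ Mset) (hρ : IsDensity ρ) : 0 ≤ muone Mset ρ :=
  mul_nonneg (by norm_num) <| Real.sInf_nonneg <| by
    rintro _ ⟨σ, ⟨hσ, -⟩, rfl⟩
    exact Mnorm_nonneg h0 (trace_sub_eq_zero hρ hσ)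

lemma muone_le (h0 : 0 ∈ Mset) (hρ : IsDensity ρ) (hσ : IsDensity σ) (h : (ρ * σ).trace = 0) :
    muone Mset ρ ≤ Mnorm Mset (ρ - σ) / 2 := by
  have hbdd : BddBelow ((fun σ => Mnorm Mset (ρ - σ)) '' {σ | IsDensity σ ∧ (ρ * σ).trace = 0}) :=
    ⟨0, by rintro _ ⟨τ, ⟨hτ, -⟩, rfl⟩; exact Mnorm_nonneg h0 (trace_sub_eq_zero hρ hτ)⟩
  have := csInf_le hbdd ⟨σ, ⟨hσ, h⟩, rfl⟩
  rw [muone]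
  linarith

lemma le_muone (hρ : IsDensity ρ) (hrank : ρ.rank < d) {c : ℝ}
    (h : ∀ σ, IsDensity σ → ρ * σ = 0 → c ≤ Mnorm Mset (ρ - σ) / 2) : c ≤ muone Mset ρ := by
  obtain ⟨σ₀, hσ₀, -, hρσ₀⟩ := exists_isDensity_rank_le_one_mul_eq_zero hrank
  have hne : ((fun σ => Mnorm Mset (ρ - σ)) '' {σ | IsDensity σ ∧ (ρ * σ).trace = 0}).Nonempty :=
    ⟨_, ⟨σ₀, ⟨hσ₀, by rw [hρσ₀, trace_zero]⟩, rfl⟩⟩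
  have h2c : 2 * c ≤
      sInf ((fun σ => Mnorm Mset (ρ - σ)) '' {σ | IsDensity σ ∧ (ρ * σ).trace = 0}) :=
    le_csInf hne <| by
      rintro _ ⟨σ, ⟨hσ, hρσ⟩, rfl⟩
      linarith [h σ hσ (hρ.1.mul_eq_zero_of_trace_mul_eq_zero hσ.1 hρσ)]
  rw [muone]
  linarith

lemma muhat_nonneg (h0 : 0 ∈ Mset) (hρ : IsDensity ρ) : 0 ≤ muhat Mset ρ :=
  Real.sInf_nonneg <| by
    rintro _ ⟨σ, ⟨hσ, -⟩, rfl⟩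
    exact div_nonneg (Mnorm_nonneg h0 (trace_sub_eq_zero hρ hσ)) (trNorm_nonneg _)

lemma muhat_le (h0 : 0 ∈ Mset) (hρ : IsDensity ρ) (hσ : IsDensity σ) (hne : σ ≠ ρ) :
    muhat Mset ρ ≤ Mnorm Mset (ρ - σ) / trNorm (ρ - σ) :=
  csInf_le ⟨0, by
    rintro _ ⟨τ, ⟨hτ, -⟩, rfl⟩
    exact div_nonneg (Mnorm_nonneg h0 (trace_sub_eq_zero hρ hτ)) (trNorm_nonneg _)⟩
    ⟨σ, ⟨hσ, hne⟩, rfl⟩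

lemma muhat_le_muone (h0 : 0 ∈ Mset) (hρ : IsDensity ρ) (hrank : ρ.rank < d) :
    muhat Mset ρ ≤ muone Mset ρ :=
  le_muone hρ hrank fun σ hσ hρσ => by
    simpa [trNorm_sub_eq_two hρ hσ hρσ] using muhat_le h0 hρ hσ (hρ.ne_of_mul_eq_zero hρσ)

/-- For `d ≤ 1` the only density matrix is `ρ` itself, so `muhat` is an infimum over `∅`. -/
lemma muhat_eq_zero_of_le_one (hd : d ≤ 1) (hρ : IsDensity ρ) : muhat Mset ρ = 0 := by
  have : Subsingleton (Fin d) := Fin.subsingleton_iff_le_one.mpr hd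
  have htrace (A : Matrix (Fin d) (Fin d) ℂ) (i : Fin d) : A.trace = A i i :=
    Fintype.sum_subsingleton _ i
  have hempty : {σ | IsDensity σ ∧ σ ≠ ρ} = ∅ := by
    refine Set.eq_empty_iff_forall_notMem.mpr fun σ ⟨hσ, hne⟩ => hne (ext fun i j => ?_)
    rw [Subsingleton.elim j i, ← htrace σ, ← htrace ρ, hσ.2, hρ.2]
  rw [muhat, hempty, Set.image_empty, Real.sInf_empty]

lemma sInf_muhat_eq_zero (h0 : 0 ∈ Mset) {r : ℕ} (hdeg : r = 0 ∨ d ≤ 1) :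
    sInf ((fun ρ => muhat Mset ρ) '' {ρ | IsDensity ρ ∧ ρ.rank ≤ r}) = 0 := by
  refine le_antisymm (Real.sInf_nonpos ?_) (Real.sInf_nonneg ?_) <;>
    rintro _ ⟨ρ, ⟨hρ, hρr⟩, rfl⟩
  · have := hρ.one_le_rank
    exact (muhat_eq_zero_of_le_one (by omega) hρ).le
  · exact muhat_nonneg h0 hρ

/-- Jordan decomposition: `t = tr (ρ - σ)⁺ = tr (ρ - σ)⁻`, as `ρ - σ` is traceless. -/
lemma exists_sub_eq_smul_sub (hρ : IsDensity ρ) (hσ : IsDensity σ) (hne : σ ≠ ρ) :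
    ∃ t : ℝ, 0 < t ∧ ∃ ρ' σ', IsDensity ρ' ∧ IsDensity σ' ∧ ρ' * σ' = 0 ∧ ρ'.rank ≤ ρ.rank ∧
      ρ - σ = t • (ρ' - σ') := by
  set P := (ρ - σ)⁺
  set N := (ρ - σ)⁻
  have hP : P.PosSemidef := (CFC.posPart_nonneg _).posSemidef
  have hN : N.PosSemidef := (CFC.negPart_nonneg _).posSemidef
  have hPN : P - N = ρ - σ := CFC.posPart_sub_negPart _ (hρ.1.1.sub hσ.1.1)
  have htrace : N.trace = P.trace :=
    (sub_eq_zero.mp (by rw [← trace_sub, hPN, trace_sub_eq_zero hρ hσ])).symm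
  have hP0 : P ≠ 0 := fun hP0 => hne <| by
    have hN0 : N = 0 := hN.trace_eq_zero_iff.mp (by rw [htrace, hP0, trace_zero])
    rw [eq_comm, ← sub_eq_zero, ← hPN, hP0, hN0, sub_zero]
  have hN0 : N ≠ 0 := fun hN0 => hP0 <| hP.trace_eq_zero_iff.mp (by rw [← htrace, hN0, trace_zero])
  set t := P.trace.re
  have ht : 0 < t := hP.trace_re_pos hP0
  have hσ' : IsDensity (t⁻¹ • N) := by
    simpa [t, htrace] using isDensity_inv_trace_smul hN hN0
  refine ⟨t, ht, t⁻¹ • P, t⁻¹ • N, isDensity_inv_trace_smul hP hP0, hσ', ?_, ?_, ?_⟩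
  · rw [smul_mul_smul_comm, CFC.posPart_mul_negPart, smul_zero]
  · exact (Matrix.rank_real_smul_le _).trans (hρ.1.rank_posPart_sub_le hσ.1)
  · rw [← smul_sub, smul_smul, mul_inv_cancel₀ ht.ne', one_smul, hPN]

lemma exists_muone_le_Mnorm_div_trNorm (h0 : 0 ∈ Mset) (hρ : IsDensity ρ) (hσ : IsDensity σ)
    (hne : σ ≠ ρ) : ∃ τ, IsDensity τ ∧ τ.rank ≤ ρ.rank ∧ τ.rank < d ∧
      muone Mset τ ≤ Mnorm Mset (ρ - σ) / trNorm (ρ - σ) := by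
  obtain ⟨t, ht, ρ', σ', hρ', hσ', hρσ', hrank, hsub⟩ := exists_sub_eq_smul_sub hρ hσ hne
  refine ⟨ρ', hρ', hrank, ?_, ?_⟩
  · have := rank_add_rank_le_card_of_mul_eq_zero hρσ'
    have := hσ'.one_le_rank
    simp only [Fintype.card_fin] at *
    omega
  · rw [hsub, Mnorm_smul ht.le, trNorm_smul ht.le, mul_div_mul_left _ _ ht.ne',
      trNorm_sub_eq_two hρ' hσ' hρσ']
    exact muone_le h0 hρ' hσ' (by rw [hρσ', trace_zero])

lemma le_muone_of_forall_rank_le_half (h0 : 0 ∈ Mset) (hsymm : ∀ M ∈ Mset, 1 - M ∈ Mset)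
    {r : ℕ} {c : ℝ}
    (hc : ∀ τ, IsDensity τ → (τ.rank : ℝ) ≤ min (r : ℝ) ((d : ℝ) / 2) → c ≤ muone Mset τ)
    (hρ : IsDensity ρ) (hρr : ρ.rank ≤ r) (hρd : ρ.rank < d) : c ≤ muone Mset ρ := by
  by_cases hhalf : 2 * ρ.rank ≤ d
  · exact hc ρ hρ (cast_le_min_half_iff.mpr ⟨hρr, hhalf⟩)
  refine le_muone hρ hρd fun σ hσ hρσ => ?_
  have hsum : ρ.rank + σ.rank ≤ d := by
    simpa using rank_add_rank_le_card_of_mul_eq_zero hρσ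
  calc c ≤ muone Mset σ := hc σ hσ (cast_le_min_half_iff.mpr ⟨by omega, by omega⟩)
    _ ≤ Mnorm Mset (σ - ρ) / 2 := muone_le h0 hσ hρ (by rw [trace_mul_comm, hρσ, trace_zero])
    _ = Mnorm Mset (ρ - σ) / 2 := by rw [← neg_sub, Mnorm_neg hsymm (trace_sub_eq_zero hρ hσ)]

lemma le_muhat_of_forall_rank_lt (h0 : 0 ∈ Mset) (hd : 2 ≤ d) {r : ℕ} {c : ℝ}
    (hc : ∀ τ, IsDensity τ → τ.rank ≤ r → τ.rank < d → c ≤ muone Mset τ)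
    (hρ : IsDensity ρ) (hρr : ρ.rank ≤ r) : c ≤ muhat Mset ρ := by
  obtain ⟨σ₀, hσ₀, hne₀⟩ := exists_isDensity_ne hd ρ
  refine le_csInf ⟨_, σ₀, ⟨hσ₀, hne₀⟩, rfl⟩ ?_
  rintro _ ⟨σ, ⟨hσ, hne⟩, rfl⟩
  obtain ⟨τ, hτ, hτρ, hτd, hτ_le⟩ := exists_muone_le_Mnorm_div_trNorm h0 hρ hσ hne
  exact (hc τ hτ (hτρ.trans hρr) hτd).trans hτ_le

theorem rank_restricted_minima_general (Mset : Set (Matrix (Fin d) (Fin d) ℂ)) (hM : IsMClass Mset)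
    (r : ℕ) :
    sInf ((fun ρ => muone Mset ρ) ''
        {ρ | IsDensity ρ ∧ (ρ.rank : ℝ) ≤ min (r : ℝ) ((d : ℝ) / 2)}) =
      sInf ((fun ρ => muone Mset ρ) '' {ρ | IsDensity ρ ∧ ρ.rank ≤ r ∧ ρ.rank < d}) ∧
    sInf ((fun ρ => muone Mset ρ) '' {ρ | IsDensity ρ ∧ ρ.rank ≤ r ∧ ρ.rank < d}) =
      sInf ((fun ρ => muhat Mset ρ) '' {ρ | IsDensity ρ ∧ ρ.rank ≤ r}) := by
  obtain ⟨h0, -, -, hsymm⟩ := hM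
  set A := {ρ | IsDensity ρ ∧ (ρ.rank : ℝ) ≤ min (r : ℝ) ((d : ℝ) / 2)}
  set B := {ρ | IsDensity ρ ∧ ρ.rank ≤ r ∧ ρ.rank < d}
  set C := {ρ : Matrix (Fin d) (Fin d) ℂ | IsDensity ρ ∧ ρ.rank ≤ r}
  have hAB : A ⊆ B := fun ρ ⟨hρ, h⟩ => ⟨hρ, hρ.rank_le_and_lt_of_cast_le_min h⟩
  rcases (show (r = 0 ∨ d ≤ 1) ∨ (1 ≤ r ∧ 2 ≤ d) by omega) with hdeg | ⟨hr1, hd⟩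
  · have hB : B = ∅ := Set.eq_empty_of_forall_notMem fun ρ ⟨hρ, hρr, hρd⟩ => by
      have := hρ.one_le_rank
      omega
    have hA : A = ∅ := Set.subset_empty_iff.mp (hB ▸ hAB)
    rw [hA, hB, sInf_muhat_eq_zero h0 hdeg]
    simp
  obtain ⟨τ₀, hτ₀, hτ₀1⟩ := exists_isDensity_rank_le_one (d := d) (by omega)
  have hτ₀A : τ₀ ∈ A := ⟨hτ₀, cast_le_min_half_iff.mpr ⟨by omega, by omega⟩⟩
  have hbddA : BddBelow ((fun ρ => muone Mset ρ) '' A) :=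
    ⟨0, Set.forall_mem_image.2 fun ρ hρ => muone_nonneg h0 hρ.1⟩
  have hbddB : BddBelow ((fun ρ => muone Mset ρ) '' B) :=
    ⟨0, Set.forall_mem_image.2 fun ρ hρ => muone_nonneg h0 hρ.1⟩
  have hbddC : BddBelow ((fun ρ => muhat Mset ρ) '' C) :=
    ⟨0, Set.forall_mem_image.2 fun ρ hρ => muhat_nonneg h0 hρ.1⟩
  refine ⟨le_antisymm ?_ (csInf_le_csInf hbddB ⟨_, τ₀, hτ₀A, rfl⟩ (Set.image_mono hAB)),
    le_antisymm ?_ ?_⟩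
  · refine le_csInf ⟨_, τ₀, hAB hτ₀A, rfl⟩ (Set.forall_mem_image.2 fun ρ ⟨hρ, hρr, hρd⟩ => ?_)
    exact le_muone_of_forall_rank_le_half h0 hsymm
      (fun τ hτ hτr => csInf_le hbddA ⟨τ, ⟨hτ, hτr⟩, rfl⟩) hρ hρr hρd
  · refine le_csInf ⟨_, τ₀, ⟨hτ₀, by omega⟩, rfl⟩ (Set.forall_mem_image.2 fun ρ ⟨hρ, hρr⟩ => ?_)
    exact le_muhat_of_forall_rank_lt h0 hd
      (fun τ hτ hτr hτd => csInf_le hbddB ⟨τ, ⟨hτ, hτr, hτd⟩, rfl⟩) hρ hρr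
  · refine le_csInf ⟨_, τ₀, hAB hτ₀A, rfl⟩ (Set.forall_mem_image.2 fun ρ ⟨hρ, hρr, hρd⟩ => ?_)
    exact (csInf_le hbddC ⟨ρ, ⟨hρ, hρr⟩, rfl⟩).trans (muhat_le_muone h0 hρ hρd)

/-- Theorem 2, second part: for r ≤ dim H, the minima of μ_{ρ,M}(1)
over rank ≤ min{r, dim H / 2}, of μ_{ρ,M}(1) over rank ≤ r, and of μ̂_{ρ,M}
over rank ≤ r, all coincide. -/
theorem rank_restricted_minima (Mset : Set (Matrix (Fin d) (Fin d) ℂ)) (hM : IsMClass Mset)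
    (r : ℕ) (hr : r ≤ d) :
    sInf ((fun ρ => muone Mset ρ) ''
        {ρ | IsDensity ρ ∧ (ρ.rank : ℝ) ≤ min (r : ℝ) ((d : ℝ) / 2)}) =
      sInf ((fun ρ => muone Mset ρ) '' {ρ | IsDensity ρ ∧ ρ.rank ≤ r ∧ ρ.rank < d}) ∧
    sInf ((fun ρ => muone Mset ρ) '' {ρ | IsDensity ρ ∧ ρ.rank ≤ r ∧ ρ.rank < d}) =
      sInf ((fun ρ => muhat Mset ρ) '' {ρ | IsDensity ρ ∧ ρ.rank ≤ r}) :=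
  rank_restricted_minima_general Mset hM r

end QSVQDH
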